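/- arXiv:1804.00587 — 4 statements merged into one kernel-verified Lean document; each statement's English description precedes it below -/
import Mathlib

section
/- Let G be a group acting on a set X, let C be a type, and let τ : X → C → G be a map satisfying the equivariance condition τ(g • x)(χ) = g * τ(x)(χ) * g⁻¹ for all g ∈ G, x ∈ X, χ ∈ C. For a, b ∈ X set D_{a,b} := G({a,b}) (the subgroup generated by all τ(a)(χ) and τ(b)(χ)) and X_{a,b} := (D_{a,b} • a) ∪ (D_{a,b} • b), the union of the D_{a,b}-orbits of a and b. If c, d ∈ X_{a,b} (i.e. the pair {a,b} dominates {c,d}), then D_{c,d} is a subgroup of D_{a,b} and X_{c,d} ⊆ X_{a,b}. -/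
/-- The subgroup of `G` generated by the images `τ(y)(χ)` for `y ∈ Y`. -/
def tauGroup {G X C : Type*} [Group G] [MulAction G X]
    (τ : X → C → G) (Y : Set X) : Subgroup G :=
  Subgroup.closure {g : G | ∃ y ∈ Y, ∃ χ : C, g = τ y χ}

/-- `D_{a,b}`, the subgroup generated by all `τ(a)(χ)` and `τ(b)(χ)`. -/
def D {G X C : Type*} [Group G] [MulAction G X]
    (τ : X → C → G) (a b : X) : Subgroup G :=
  tauGroup τ ({a, b} : Set X)

/-- `X_{a,b}`, the union of the `D_{a,b}`-orbits of `a` and `b`. -/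
def Xab {G X C : Type*} [Group G] [MulAction G X]
    (τ : X → C → G) (a b : X) : Set X :=
  {z : X | ∃ g ∈ D τ a b, z = g • a} ∪ {z : X | ∃ g ∈ D τ a b, z = g • b}

lemma tau_mem_of_mem_Xab
    {G X C : Type*} [Group G] [MulAction G X]
    (τ : X → C → G)
    (hτ : ∀ (g : G) (x : X) (χ : C), τ (g • x) χ = g * τ x χ * g⁻¹)
    (a b x : X) (hx : x ∈ Xab τ a b) (χ : C) : τ x χ ∈ D τ a b := by
  have hgen : ∀ y ∈ ({a, b} : Set X), ∀ χ : C, τ y χ ∈ D τ a b := by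
    intro y hy χ
    exact Subgroup.subset_closure ⟨y, hy, χ, rfl⟩
  rcases hx with ⟨g, hg, rfl⟩ | ⟨g, hg, rfl⟩
  · rw [hτ]
    exact mul_mem (mul_mem hg (hgen a (Or.inl rfl) χ)) (inv_mem hg)
  · rw [hτ]
    exact mul_mem (mul_mem hg (hgen b (Or.inr rfl) χ)) (inv_mem hg)

/-- If `{a,b}` dominates `{c,d}` then `D_{c,d} ≤ D_{a,b}` and `X_{c,d} ⊆ X_{a,b}`. -/
theorem domination
    {G X C : Type*} [Group G] [MulAction G X]
    (τ : X → C → G)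
    (hτ : ∀ (g : G) (x : X) (χ : C), τ (g • x) χ = g * τ x χ * g⁻¹)
    (a b c d : X) (hc : c ∈ Xab τ a b) (hd : d ∈ Xab τ a b) :
    D τ c d ≤ D τ a b ∧ Xab τ c d ⊆ Xab τ a b := by
  have hD : D τ c d ≤ D τ a b := by
    apply Subgroup.closure_le (D τ a b) |>.mpr
    rintro g ⟨y, hy, χ, rfl⟩
    rcases hy with rfl | rfl
    · exact tau_mem_of_mem_Xab τ hτ a b y hc χ
    · exact tau_mem_of_mem_Xab τ hτ a b y hd χ
  refine ⟨hD, ?_⟩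
  intro z hz
  have key : ∀ e : X, e ∈ Xab τ a b → ∀ g ∈ D τ c d, g • e ∈ Xab τ a b := by
    rintro e (⟨h, hh, rfl⟩ | ⟨h, hh, rfl⟩) g hg
    · exact Or.inl ⟨g * h, mul_mem (hD hg) hh, (mul_smul g h a).symm⟩
    · exact Or.inr ⟨g * h, mul_mem (hD hg) hh, (mul_smul g h b).symm⟩
  rcases hz with ⟨g, hg, rfl⟩ | ⟨g, hg, rfl⟩
  · exact key c hc g hg
  · exact key d hd g hg
end

section
/- Let A be a non-unital commutative non-associative algebra over a field F and let X ⊆ A be a set that generates A as a non-unital F-subalgebra, such that every a ∈ X satisfies: a·a = a; the adjoint map ad_a(v) = a·v is diagonalisable (the sum of the eigenspaces of ad_a is all of A); and the 1-eigenspace of ad_a is the line F • a (primitivity). If B₁ and B₂ are bilinear forms on A, each associating with the product (Bᵢ(x·y, z) = Bᵢ(x, y·z) for all x, y, z ∈ A), and B₁(a, a) = B₂(a, a) for every a ∈ X, then B₁ = B₂. (A Frobenius form on a primitive axial algebra is uniquely determined by its values on the axes.) -/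
/-- A Frobenius form on a primitive axial algebra is uniquely determined by
its values on the axes. -/
theorem frobenius_form_unique
    {F A : Type*} [Field F] [NonUnitalNonAssocCommRing A]
    [Module F A] [SMulCommClass F A A] [IsScalarTower F A A]
    (X : Set A) (hgen : NonUnitalAlgebra.adjoin F X = ⊤)
    (hidem : ∀ a ∈ X, a * a = a)
    (hdiag : ∀ a ∈ X, (⨆ μ : F, Module.End.eigenspace (LinearMap.mul F A a) μ) = ⊤)
    (hprim : ∀ a ∈ X,
      Module.End.eigenspace (LinearMap.mul F A a) 1 = Submodule.span F {a})
    (B₁ B₂ : A →ₗ[F] A →ₗ[F] F)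
    (hB₁ : ∀ x y z : A, B₁ (x * y) z = B₁ x (y * z))
    (hB₂ : ∀ x y z : A, B₂ (x * y) z = B₂ x (y * z))
    (haxes : ∀ a ∈ X, B₁ a a = B₂ a a) :
    B₁ = B₂ := by
  set B : A →ₗ[F] A →ₗ[F] F := B₁ - B₂ with hBdef
  have hB : ∀ x y z : A, B (x * y) z = B x (y * z) := by
    intro x y z
    simp [hBdef, hB₁, hB₂]
  -- Step 1: for each axis a, B a v = 0 for all v.
  have key : ∀ a ∈ X, ∀ v : A, B a v = 0 := by
    intro a ha v
    have hv : v ∈ (⨆ μ : F, Module.End.eigenspace (LinearMap.mul F A a) μ) := by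
      rw [hdiag a ha]; trivial
    refine Submodule.iSup_induction (motive := fun w => B a w = 0) _ hv ?_ ?_ ?_
    · intro μ w hw
      have hmul : a * w = μ • w := by
        have := (Module.End.mem_eigenspace_iff).mp hw
        simpa using this
      by_cases hμ : μ = 1
      · subst hμ
        rw [hprim a ha] at hw
        obtain ⟨c, rfl⟩ := Submodule.mem_span_singleton.mp hw
        have h0 : B a a = 0 := by
          simp [hBdef, sub_eq_zero.mpr (haxes a ha)]
        rw [map_smul, h0, smul_zero]
      · have h1 : B a (a * w) = B a w := by
          rw [← hB a a w, hidem a ha]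
        rw [hmul] at h1
        have h2 : μ * B a w = B a w := by simpa using h1
        have h3 : (μ - 1) * B a w = 0 := by
          rw [sub_mul, one_mul, h2, sub_self]
        rcases mul_eq_zero.mp h3 with h | h
        · exact absurd (sub_eq_zero.mp h) hμ
        · exact h
    · simp
    · intro x y hx hy
      simp [hx, hy]
  -- Step 2: extend to all of A by adjoin induction.
  have all : ∀ x : A, ∀ v : A, B x v = 0 := by
    intro x
    have hx : x ∈ NonUnitalAlgebra.adjoin F X := by rw [hgen]; trivial
    induction hx using NonUnitalAlgebra.adjoin_induction with
    | mem a ha => exact key a ha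
    | add x y _ _ hx hy => intro v; simp [hx, hy]
    | zero => intro v; simp
    | mul x y _ _ hx _ => intro v; rw [hB]; exact hx _
    | smul c x _ hx => intro v; simp [hx]
  have : B = 0 := by
    ext x v; exact all x v
  have := (sub_eq_zero (a := B₁) (b := B₂)).mp (show B₁ - B₂ = 0 by rw [← hBdef]; exact this)
  exact this.symm ▸ rfl
end

section
/- In the Norton–Sakuma algebra of type 2A (the 3-dimensional commutative ℚ-algebra with basis e₀, e₁, e_ρ and products e_i·e_i = e_i, e₀·e₁ = (1/8)(e₀+e₁−e_ρ), e₀·e_ρ = (1/8)(e₀+e_ρ−e₁), e₁·e_ρ = (1/8)(e₁+e_ρ−e₀)), the element e₀ is a primitive axis for the Monster fusion law: (1) e₀·e₀ = e₀; (2) the adjoint map ad_{e₀} is diagonalisable with all eigenvalues contained in {1, 0, 1/4}; (3) its 1-eigenspace equals ℚ • e₀; and (4) the eigenspaces obey the Monster fusion rules: E(0)·E(0) ⊆ E(0), E(0)·E(1/4) ⊆ E(1/4), E(1)·E(0) = 0, E(1)·E(1/4) ⊆ E(1/4), and E(1/4)·E(1/4) ⊆ E(1) ⊔ E(0), where E(λ)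 denotes the λ-eigenspace of ad_{e₀}. -/
/-- The Norton–Sakuma algebra of type 2A: the bilinear multiplication on
`ℚ³` with basis `e₀, e₁, e_ρ` given by `eᵢ·eᵢ = eᵢ`,
`e₀·e₁ = (1/8)(e₀+e₁−e_ρ)`, `e₀·e_ρ = (1/8)(e₀+e_ρ−e₁)`,
`e₁·e_ρ = (1/8)(e₁+e_ρ−e₀)`. -/
def mul2A (x y : Fin 3 → ℚ) : Fin 3 → ℚ :=
  ![x 0 * y 0 + (1/8) * (x 0 * y 1 + x 1 * y 0 + x 0 * y 2 + x 2 * y 0 - x 1 * y 2 - x 2 * y 1),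
    x 1 * y 1 + (1/8) * (x 0 * y 1 + x 1 * y 0 - x 0 * y 2 - x 2 * y 0 + x 1 * y 2 + x 2 * y 1),
    x 2 * y 2 + (1/8) * (-(x 0 * y 1) - x 1 * y 0 + x 0 * y 2 + x 2 * y 0 + x 1 * y 2 + x 2 * y 1)]

/-- The basis vectors `e₀, e₁, e_ρ` of the 2A algebra. -/
def e2A (i : Fin 3) : Fin 3 → ℚ := Pi.single i 1

/-- The adjoint map `ad_{e₀} : y ↦ e₀ · y` of the axis `e₀`. -/
def ad2A : (Fin 3 → ℚ) →ₗ[ℚ] (Fin 3 → ℚ) where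
  toFun := mul2A (e2A 0)
  map_add' x y := by
    funext i
    fin_cases i <;>
      simp [mul2A, e2A, Pi.single_apply] <;> ring
  map_smul' c x := by
    funext i
    fin_cases i <;>
      simp [mul2A, e2A, Pi.single_apply] <;> ring

/-- `E μ` is the `μ`-eigenspace of `ad_{e₀}`. -/
def E2A (μ : ℚ) : Submodule ℚ (Fin 3 → ℚ) := Module.End.eigenspace ad2A μ

lemma mem_E2A {μ : ℚ} {x : Fin 3 → ℚ} :
    x ∈ E2A μ ↔ mul2A (e2A 0) x = μ • x := by
  rw [E2A, Module.End.mem_eigenspace_iff]; rfl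

lemma ad_apply (x : Fin 3 → ℚ) :
    mul2A (e2A 0) x = ![x 0 + (x 1 + x 2)/8, (x 1 - x 2)/8, (x 2 - x 1)/8] := by
  funext i
  fin_cases i <;> simp [mul2A, e2A, Pi.single_apply] <;> ring

lemma mem_E2A' {μ : ℚ} {x : Fin 3 → ℚ} :
    x ∈ E2A μ ↔ (x 0 + (x 1 + x 2)/8 = μ * x 0 ∧ (x 1 - x 2)/8 = μ * x 1 ∧
      (x 2 - x 1)/8 = μ * x 2) := by
  rw [mem_E2A, ad_apply, funext_iff, Fin.forall_fin_succ, Fin.forall_fin_succ,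
    Fin.forall_fin_one]
  simp [Pi.smul_apply, smul_eq_mul]


lemma mem_E1 {x : Fin 3 → ℚ} : x ∈ E2A 1 ↔ x 1 = 0 ∧ x 2 = 0 := by
  rw [mem_E2A']
  constructor
  · rintro ⟨h0, h1, h2⟩
    constructor <;> linarith
  · rintro ⟨h1, h2⟩
    refine ⟨by linarith, by linarith, by linarith⟩

lemma mem_E0 {x : Fin 3 → ℚ} : x ∈ E2A 0 ↔ x 2 = x 1 ∧ x 0 = -(x 1)/4 := by
  rw [mem_E2A']
  constructor
  · rintro ⟨h0, h1, h2⟩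
    constructor <;> linarith
  · rintro ⟨h1, h2⟩
    refine ⟨by linarith, by linarith, by linarith⟩

lemma mem_Eq {x : Fin 3 → ℚ} : x ∈ E2A (1/4) ↔ x 0 = 0 ∧ x 2 = -(x 1) := by
  rw [mem_E2A']
  constructor
  · rintro ⟨h0, h1, h2⟩
    constructor <;> linarith
  · rintro ⟨h1, h2⟩
    refine ⟨by linarith, by linarith, by linarith⟩

/-- In the Norton–Sakuma algebra of type 2A, `e₀` is a primitive axis for the
Monster fusion law. -/
theorem nortonSakuma2A_axis :
    mul2A (e2A 0) (e2A 0) = e2A 0 ∧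
    (⨆ μ : ℚ, E2A μ) = ⊤ ∧
    (∀ μ : ℚ, Module.End.HasEigenvalue ad2A μ → μ ∈ ({1, 0, 1/4} : Set ℚ)) ∧
    E2A 1 = Submodule.span ℚ {e2A 0} ∧
    (∀ u ∈ E2A 0, ∀ v ∈ E2A 0, mul2A u v ∈ E2A 0) ∧
    (∀ u ∈ E2A 0, ∀ v ∈ E2A (1/4), mul2A u v ∈ E2A (1/4)) ∧
    (∀ u ∈ E2A 1, ∀ v ∈ E2A 0, mul2A u v = 0) ∧
    (∀ u ∈ E2A 1, ∀ v ∈ E2A (1/4), mul2A u v ∈ E2A (1/4)) ∧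
    (∀ u ∈ E2A (1/4), ∀ v ∈ E2A (1/4), mul2A u v ∈ E2A 1 ⊔ E2A 0) := by

  refine ⟨?_, ?_, ?_, ?_, ?_, ?_, ?_, ?_, ?_⟩
  · funext i
    fin_cases i <;> simp [mul2A, e2A, Pi.single_apply]
  · -- diagonalisable
    rw [eq_top_iff]
    intro x _
    have hx : x = ![x 0 + (x 1 + x 2)/8, 0, 0] + ![-((x 1 + x 2)/2)/4, (x 1 + x 2)/2, (x 1 + x 2)/2]
        + ![0, (x 1 - x 2)/2, -((x 1 - x 2)/2)] := by
      funext i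
      fin_cases i <;> simp <;> ring
    rw [hx]
    refine add_mem (add_mem ?_ ?_) ?_
    · exact Submodule.mem_iSup_of_mem 1 (mem_E1.mpr ⟨by simp, by simp⟩)
    · exact Submodule.mem_iSup_of_mem 0 (mem_E0.mpr ⟨by simp, by simp⟩)
    · exact Submodule.mem_iSup_of_mem (1/4) (mem_Eq.mpr ⟨by simp, by simp⟩)
  · -- eigenvalues
    intro μ hμ
    by_contra hc
    simp only [Set.mem_insert_iff, Set.mem_singleton_iff, not_or] at hc
    obtain ⟨h1, h0, hq⟩ := hc
    obtain ⟨x, hx⟩ := hμ.exists_hasEigenvector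
    have hm : x ∈ E2A μ := hx.1
    rw [mem_E2A'] at hm
    obtain ⟨e0, e1, e2⟩ := hm
    have hsum : μ * (x 1 + x 2) = 0 := by linarith
    have hdiff : (μ - 1/4) * (x 1 - x 2) = 0 := by ring_nf; ring_nf at e1 e2; linarith
    have h12 : x 1 + x 2 = 0 := by
      rcases mul_eq_zero.mp hsum with h | h
      · exact absurd h h0
      · exact h
    have h12' : x 1 - x 2 = 0 := by
      rcases mul_eq_zero.mp hdiff with h | h
      · exact absurd (by linarith : μ = 1/4) hq
      · exact h
    have hx1 : x 1 = 0 := by linarith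
    have hx2 : x 2 = 0 := by linarith
    have hx0 : x 0 = 0 := by
      have : (μ - 1) * x 0 = 0 := by rw [hx1, hx2] at e0; linarith
      rcases mul_eq_zero.mp this with h | h
      · exact absurd (by linarith : μ = 1) h1
      · exact h
    exact hx.2 (funext fun i => by fin_cases i <;> assumption)
  · -- E(1) = span
    apply le_antisymm
    · intro x hx
      rw [mem_E1] at hx
      rw [Submodule.mem_span_singleton]
      refine ⟨x 0, ?_⟩
      funext i
      fin_cases i <;> simp [e2A, Pi.single_apply, hx.1, hx.2]
    · rw [Submodule.span_le, Set.singleton_subset_iff]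
      exact mem_E1.mpr ⟨by simp [e2A], by simp [e2A]⟩
  · intro u hu v hv
    rw [mem_E0] at hu hv ⊢
    obtain ⟨hu2, hu0⟩ := hu
    obtain ⟨hv2, hv0⟩ := hv
    constructor <;> · simp only [mul2A]; simp [hu2, hu0, hv2, hv0] <;> ring
  · intro u hu v hv
    rw [mem_E0] at hu
    rw [mem_Eq] at hv ⊢
    obtain ⟨hu2, hu0⟩ := hu
    obtain ⟨hv0, hv2⟩ := hv
    constructor <;> · simp only [mul2A]; simp [hu2, hu0, hv0, hv2] <;> ring
  · intro u hu v hv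
    rw [mem_E1] at hu
    rw [mem_E0] at hv
    obtain ⟨hu1, hu2⟩ := hu
    obtain ⟨hv2, hv0⟩ := hv
    funext i
    fin_cases i <;> · simp only [mul2A]; simp [hu1, hu2, hv2, hv0] <;> ring
  · intro u hu v hv
    rw [mem_E1] at hu
    rw [mem_Eq] at hv ⊢
    obtain ⟨hu1, hu2⟩ := hu
    obtain ⟨hv0, hv2⟩ := hv
    constructor <;> · simp only [mul2A]; simp [hu1, hu2, hv0, hv2] <;> ring
  · intro u hu v hv
    rw [mem_Eq] at hu hv
    obtain ⟨hu0, hu2⟩ := hu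
    obtain ⟨hv0, hv2⟩ := hv
    have key : mul2A u v = ![7/16 * (u 1 * v 1), 0, 0] +
        ![-(3/4 * (u 1 * v 1))/4, 3/4 * (u 1 * v 1), 3/4 * (u 1 * v 1)] := by
      funext i
      fin_cases i <;> · simp only [mul2A]; simp [hu0, hu2, hv0, hv2] <;> ring
    rw [key]
    exact Submodule.add_mem_sup (mem_E1.mpr ⟨by simp, by simp⟩)
      (mem_E0.mpr ⟨by simp, by simp⟩)
end

section
/- The Norton–Sakuma algebra of type 2A admits a Frobenius form that is non-zero on the axes: the symmetric bilinear form B on the 3-dimensional commutative ℚ-algebra with basis e₀, e₁, e_ρ defined by B(e_i, e_i) = 1 for each basis vector and B(e_i, e_j) = 1/8 for i ≠ j satisfies B(x·y, z) = B(x, y·z) for all x, y, z in the algebra. -/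
/-- The bilinear form with `B(eᵢ,eᵢ) = 1` and `B(eᵢ,eⱼ) = 1/8` for `i ≠ j`. -/
def B2A (x y : Fin 3 → ℚ) : ℚ :=
  x 0 * y 0 + x 1 * y 1 + x 2 * y 2 +
    (1/8) * (x 0 * y 1 + x 1 * y 0 + x 0 * y 2 + x 2 * y 0 + x 1 * y 2 + x 2 * y 1)

/-- The Norton–Sakuma algebra of type 2A admits a Frobenius form that is
non-zero on the axes: the form `B2A` takes value `1` on each basis vector,
`1/8` on distinct basis vectors, and associates with the product. -/
theorem nortonSakuma2A_frobenius :
    (∀ i : Fin 3, B2A (e2A i) (e2A i) = 1) ∧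
    (∀ i j : Fin 3, i ≠ j → B2A (e2A i) (e2A j) = 1/8) ∧
    (∀ x y z : Fin 3 → ℚ, B2A (mul2A x y) z = B2A x (mul2A y z)) := by
  refine ⟨?_, ?_, ?_⟩
  · intro i; fin_cases i <;> simp [B2A, e2A, Pi.single] <;> norm_num
  · intro i j h; fin_cases i <;> fin_cases j <;> simp_all [B2A, e2A, Pi.single] <;> norm_num
  · intro x y z
    simp only [B2A, mul2A, Matrix.cons_val_zero, Matrix.cons_val_one, Matrix.head_cons,
      Matrix.cons_val_two, Matrix.tail_cons]
    ring
end
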